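/- arXiv:2601.23008 — 11 statements merged into one kernel-verified Lean document; each statement's English description precedes it below -/
import Mathlib

section
/- Every locally complete locally convex space E has the property (MK): every Mackey null sequence in E is a K-sequence. -/
open Filter Topology

section Defs

variable {E : Type*} [AddCommGroup E] [Module ℝ E] [TopologicalSpace E]

/-- A sequence is a K-sequence if every subsequence contains a further subsequence
whose series converges. -/
def IsKSequence (x : ℕ → E) : Prop :=
  ∀ φ : ℕ → ℕ, StrictMono φ → ∃ ψ : ℕ → ℕ, StrictMono ψ ∧
    ∃ s : E, Tendsto (fun N => ∑ k ∈ Finset.range N, x (φ (ψ k))) atTop (𝓝 s)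

/-- A sequence is Mackey null if `a n • x n → 0` for some increasing unbounded
sequence of positive reals. -/
def IsMackeyNull (x : ℕ → E) : Prop :=
  ∃ a : ℕ → ℝ, (∀ n, 0 < a n) ∧ Monotone a ∧ Tendsto a atTop atTop ∧
    Tendsto (fun n => a n • x n) atTop (𝓝 (0 : E))

variable (E) in
/-- Property (K): every null sequence is a K-sequence. -/
def PropertyK : Prop :=
  ∀ x : ℕ → E, Tendsto x atTop (𝓝 (0 : E)) → IsKSequence x

variable (E) in
/-- Property (MK): every Mackey null sequence is a K-sequence. -/
def PropertyMK : Prop :=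
  ∀ x : ℕ → E, IsMackeyNull x → IsKSequence x

variable (E) in
/-- A tvs is feral if every von Neumann bounded subset spans a
finite-dimensional subspace. -/
def Feral : Prop :=
  ∀ s : Set E, Bornology.IsVonNBounded ℝ s → FiniteDimensional ℝ (Submodule.span ℝ s)

variable (E) in
/-- Local completeness: the closed absolutely convex hull of any null sequence is compact. -/
def LocallyCompleteLCS : Prop :=
  ∀ x : ℕ → E, Tendsto x atTop (𝓝 (0 : E)) →
    IsCompact (closure (convexHull ℝ (balancedHull ℝ (Set.range x))))

end Defs

/-- A space is κ-Fréchet–Urysohn if every point in the closure of an open set is a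
limit of a sequence from that open set. -/
def KappaFrechetUrysohn (X : Type*) [TopologicalSpace X] : Prop :=
  ∀ U : Set X, IsOpen U → ∀ x ∈ closure U, ∃ u : ℕ → X, (∀ n, u n ∈ U) ∧ Tendsto u atTop (𝓝 x)

/-! Rescaling a Mackey null sequence gives a null sequence `y n = a n • x n`, whose closed
absolutely convex hull `B` is compact, hence bounded and complete. Along a subsequence with
`∑ (a n)⁻¹ ≤ 1`, the series `∑ x n = ∑ (a n)⁻¹ • y n` has partial sums in `B` and is Cauchy,
since `B` is bounded and the coefficients are summable; so it converges. -/

open Pointwise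

theorem Convex.sum_smul_mem_smul {ι E : Type*} [AddCommGroup E] [Module ℝ E] {B : Set E}
    (hB : Convex ℝ B) (h0 : (0 : E) ∈ B) {t : Finset ι} {c : ι → ℝ} {z : ι → E}
    (hc : ∀ i ∈ t, 0 ≤ c i) (hz : ∀ i ∈ t, z i ∈ B) :
    ∑ i ∈ t, c i • z i ∈ (∑ i ∈ t, c i) • B := by
  rcases (Finset.sum_nonneg hc).eq_or_lt with hsum | hsum
  · have hzero : ∑ i ∈ t, c i • z i = 0 := Finset.sum_eq_zero fun i hi => by
      rw [(Finset.sum_eq_zero_iff_of_nonneg hc).1 hsum.symm i hi, zero_smul]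
    rw [hzero]
    exact Set.zero_mem_smul_set h0
  · have hmass := Set.smul_mem_smul_set (a := ∑ i ∈ t, c i) (hB.centerMass_mem hc hsum hz)
    rwa [Finset.centerMass, smul_inv_smul₀ hsum.ne'] at hmass

section UniformAddGroup

variable {ι E : Type*} [AddCommGroup E] [Module ℝ E] [UniformSpace E] [IsUniformAddGroup E]
  {B : Set E} {c : ι → ℝ} {z : ι → E}

theorem Bornology.IsVonNBounded.cauchySeq_finset_sum_smul (hB : IsVonNBounded ℝ B)
    (hconv : Convex ℝ B) (h0 : (0 : E) ∈ B) (hc0 : ∀ i, 0 ≤ c i) (hc : Summable c)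
    (hz : ∀ i, z i ∈ B) : CauchySeq fun t : Finset ι => ∑ i ∈ t, c i • z i := by
  refine cauchySeq_finset_iff_sum_vanishing.2 fun U hU => ?_
  obtain ⟨δ, hδ, hsmall⟩ :=
    Metric.eventually_nhds_iff.1 ((hB hU).eventually_nhds_zero (mem_of_mem_nhds hU))
  obtain ⟨s, hs⟩ := summable_iff_vanishing.1 hc _ (Metric.ball_mem_nhds 0 hδ)
  refine ⟨s, fun t ht => ?_⟩
  obtain ⟨b, hb, hsum⟩ := hconv.sum_smul_mem_smul h0 (fun i _ => hc0 i) (fun i _ => hz i)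
  rw [← hsum]
  exact hsmall (hs t ht) hb

theorem Bornology.IsVonNBounded.summable_smul_of_isComplete (hB : IsVonNBounded ℝ B)
    (hconv : Convex ℝ B) (h0 : (0 : E) ∈ B) (hcomplete : IsComplete B) (hc0 : ∀ i, 0 ≤ c i)
    (hc : Summable c) (hc1 : ∑' i, c i ≤ 1) (hz : ∀ i, z i ∈ B) :
    Summable fun i => c i • z i := by
  have hpartial (t : Finset ι) : ∑ i ∈ t, c i • z i ∈ B := by
    obtain ⟨b, hb, hsum⟩ := hconv.sum_smul_mem_smul h0 (fun i _ => hc0 i) (fun i _ => hz i)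
    rw [← hsum]
    exact hconv.smul_mem_of_zero_mem h0 hb
      ⟨Finset.sum_nonneg fun i _ => hc0 i, (hc.sum_le_tsum t fun i _ => hc0 i).trans hc1⟩
  obtain ⟨s, -, hs⟩ := cauchySeq_tendsto_of_isComplete hcomplete hpartial
    (hB.cauchySeq_finset_sum_smul hconv h0 hc0 hc hz)
  exact ⟨s, hs⟩

end UniformAddGroup

theorem Filter.Tendsto.exists_strictMono_tsum_inv_le_one {a : ℕ → ℝ}
    (ha : Tendsto a atTop atTop) :
    ∃ ψ : ℕ → ℕ, StrictMono ψ ∧ Summable (fun k => (a (ψ k))⁻¹) ∧ ∑' k, (a (ψ k))⁻¹ ≤ 1 := by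
  obtain ⟨ψ, hψ, hlarge⟩ := extraction_forall_of_eventually'
    fun k : ℕ => (ha.eventually_ge_atTop (2 * 2 ^ k)).exists_forall_of_atTop
  have hle (k : ℕ) : (a (ψ k))⁻¹ ≤ 1 / 2 / 2 ^ k := by
    rw [div_div, one_div]
    exact inv_anti₀ (by positivity) (hlarge k)
  have hnonneg (k : ℕ) : 0 ≤ (a (ψ k))⁻¹ :=
    inv_nonneg.2 ((by positivity : (0 : ℝ) ≤ 2 * 2 ^ k).trans (hlarge k))
  have hsummable := (summable_geometric_two' 1).of_nonneg_of_le hnonneg hle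
  refine ⟨ψ, hψ, hsummable, ?_⟩
  calc ∑' k, (a (ψ k))⁻¹ ≤ ∑' k : ℕ, 1 / 2 / 2 ^ k :=
        hsummable.tsum_le_tsum hle (summable_geometric_two' 1)
    _ = 1 := tsum_geometric_two' 1

theorem stmt2_general {E : Type*} [AddCommGroup E] [Module ℝ E] [TopologicalSpace E]
    [IsTopologicalAddGroup E] [ContinuousSMul ℝ E]
    (hE : LocallyCompleteLCS E) : PropertyMK E := by
  rintro x ⟨a, ha0, -, ha, hax⟩ φ hφ
  let := IsTopologicalAddGroup.rightUniformSpace E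
  have := isUniformAddGroup_of_addCommGroup (G := E)
  set y : ℕ → E := fun n => a n • x n
  set B := closure (convexHull ℝ (balancedHull ℝ (Set.range y)))
  have hB : IsCompact B := hE y hax
  have hyB (n : ℕ) : y n ∈ B :=
    subset_closure (subset_convexHull ℝ _ (subset_balancedHull ℝ ⟨n, rfl⟩))
  have hB0 : (0 : E) ∈ B := by
    simpa using (balancedHull.balanced _).convexHull.closure.smul_mem (a := (0 : ℝ)) (by simp)
      (hyB 0)
  obtain ⟨ψ, hψ, hc, hc1⟩ := (ha.comp hφ.tendsto_atTop).exists_strictMono_tsum_inv_le_one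
  have hsum := (hB.isVonNBounded ℝ).summable_smul_of_isComplete ((convex_convexHull ℝ _).closure)
    hB0 hB.isComplete (fun k => (inv_pos.2 (ha0 _)).le) hc hc1 fun k => hyB (φ (ψ k))
  have hx : Summable fun k => x (φ (ψ k)) := by
    simpa only [y, inv_smul_smul₀ (ha0 _).ne'] using hsum
  exact ⟨ψ, hψ, _, hx.hasSum.tendsto_sum_nat⟩

theorem stmt2 {E : Type*} [AddCommGroup E] [Module ℝ E] [TopologicalSpace E]
    [IsTopologicalAddGroup E] [ContinuousSMul ℝ E] [LocallyConvexSpace ℝ E]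
    (hE : LocallyCompleteLCS E) : PropertyMK E :=
  stmt2_general hE
end

section
/- The complete locally convex space ℝ^(ℓ²) (the product of copies of ℝ indexed by elements of ℓ²) does not have the property (K): the sequence x_n := (ξ(n))_{ξ ∈ ℓ²} converges to 0 but no subsequence (x_{n_k}) has a convergent series ∑_k x_{n_k}. -/
open Filter Topology

/-!
Pointwise convergence to `0` holds because every `ξ ∈ ℓ²` tends to `0`. For a subsequence `φ`,
choose `ξ ∈ ℓ²` with `ξ (φ k) = 1 / (k + 1)` (possible since `∑ 1 / (k + 1)² < ∞`); the partial
sums of `∑ₖ x_{φ k}` evaluated at `ξ` are the harmonic partial sums, which diverge.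
-/

open ENNReal Function

namespace lp

variable {α : Type*} {E : Type*} [NormedAddCommGroup E] {p : ℝ≥0∞}

theorem tendsto_cofinite_zero (hp : 0 < p.toReal) (ξ : lp (fun _ : α => E) p) :
    Tendsto (fun i => ξ i) cofinite (𝓝 0) := by
  have hpow : Tendsto (fun i => ‖ξ i‖ ^ p.toReal) cofinite (𝓝 0) :=
    ((memℓp_gen_iff hp).1 ξ.2).tendsto_cofinite_zero
  have hroot : Tendsto (fun i => (‖ξ i‖ ^ p.toReal) ^ p.toReal⁻¹) cofinite (𝓝 0) := by
    simpa [Real.zero_rpow (inv_pos.2 hp).ne'] using hpow.rpow_const (.inr (inv_pos.2 hp).le)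
  rw [tendsto_zero_iff_norm_tendsto_zero]
  refine hroot.congr fun i => ?_
  rw [← Real.rpow_mul (norm_nonneg _), mul_inv_cancel₀ hp.ne', Real.rpow_one]

theorem exists_comp_eq {ι : Type*} {φ : ι → α} (hφ : Injective φ) {a : ι → E} (ha : Memℓp a p)
    (hp : 0 < p.toReal) : ∃ ξ : lp (fun _ : α => E) p, ∀ k, ξ (φ k) = a k := by
  have hext : Memℓp (extend φ a 0) p := by
    refine (memℓp_gen_iff hp).2 ?_
    have hnorm :
        (fun i => ‖extend φ a 0 i‖ ^ p.toReal) = extend φ (fun k => ‖a k‖ ^ p.toReal) 0 := by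
      ext i
      simp [apply_extend (fun x : E => ‖x‖ ^ p.toReal), comp_def, Real.zero_rpow hp.ne',
        ← Pi.zero_def]
    rw [hnorm, summable_extend_zero hφ]
    exact (memℓp_gen_iff hp).1 ha
  exact ⟨⟨extend φ a 0, hext⟩, fun k => hφ.extend_apply a 0 k⟩

end lp

theorem memℓp_one_div_nat_succ {p : ℝ≥0∞} (hp : 1 < p.toReal) :
    Memℓp (fun k : ℕ => 1 / (k + 1 : ℝ)) p := by
  refine memℓp_gen ?_
  have := (summable_nat_add_iff 1).2 (Real.summable_one_div_nat_rpow.2 hp)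
  refine this.congr fun k => ?_
  rw [Real.norm_of_nonneg (by positivity), Real.div_rpow zero_le_one (by positivity), Real.one_rpow]
  norm_cast

theorem stmt3 :
    Tendsto (fun n (ξ : lp (fun _ : ℕ => ℝ) 2) => (ξ n : ℝ)) atTop
      (𝓝 (0 : (lp (fun _ : ℕ => ℝ) 2) → ℝ)) ∧
    ∀ φ : ℕ → ℕ, StrictMono φ →
      ¬ ∃ s : (lp (fun _ : ℕ => ℝ) 2) → ℝ,
        Tendsto (fun N => ∑ k ∈ Finset.range N,
            (fun ξ : lp (fun _ : ℕ => ℝ) 2 => (ξ (φ k) : ℝ))) atTop (𝓝 s) := by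
  have htwo : (1 : ℝ) < (2 : ℝ≥0∞).toReal := by norm_num
  refine ⟨tendsto_pi_nhds.2 fun ξ => ?_, ?_⟩
  · simpa [Nat.cofinite_eq_atTop] using lp.tendsto_cofinite_zero (one_pos.trans htwo) ξ
  · rintro φ hφ ⟨s, hs⟩
    obtain ⟨ξ, hξ⟩ :=
      lp.exists_comp_eq hφ.injective (memℓp_one_div_nat_succ htwo) (one_pos.trans htwo)
    have hpartial := tendsto_pi_nhds.1 hs ξ
    simp only [Finset.sum_apply, hξ] at hpartial
    exact not_tendsto_nhds_of_tendsto_atTop Real.tendsto_sum_range_one_div_nat_succ_atTop _ hpartial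
end

section
/- Let E be a topological vector space with property (α₄): for every family (ξ_n) of sequences converging to 0, there is a sequence converging to 0 meeting infinitely many of the ξ_n. Then every null sequence in E contains a Mackey null subsequence; consequently E has property (K) if and only if E has property (MK). -/
/-!
Given a null sequence `x`, the sequences `ξ n = ((n + 1) • x (k + n))ₖ` are null, so by (α₄) a single
null sequence `σ` meets infinitely many of them: `(n + 1) • x (p n) = σ (m n)` with `n ≤ p n` for
infinitely many `n`. Choosing such `n₀ < n₁ < ⋯` with `p nⱼ < nⱼ₊₁` gives a subsequence `x (p nⱼ)`
which is `σ`, a bounded set, scaled down by `(nⱼ + 1)⁻¹`; multiplying by `√(nⱼ + 1)` still leaves a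
null sequence. Property (K) then follows from (MK) by passing to such a subsequence first.
-/

open Filter Topology

section MackeyNull

variable {E : Type*} [AddCommGroup E] [Module ℝ E] [TopologicalSpace E]

variable (E) in
def PropertyAlpha4 : Prop :=
  ∀ ξ : ℕ → ℕ → E, (∀ n, Tendsto (ξ n) atTop (𝓝 (0 : E))) →
    ∃ σ : ℕ → E, Tendsto σ atTop (𝓝 (0 : E)) ∧ {n | ∃ k m, ξ n k = σ m}.Infinite

theorem IsMackeyNull.tendsto_zero [ContinuousSMul ℝ E] {x : ℕ → E} (hx : IsMackeyNull x) :
    Tendsto x atTop (𝓝 0) := by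
  obtain ⟨a, ha_pos, -, ha_top, hax⟩ := hx
  have h := (tendsto_inv_atTop_zero.comp ha_top).smul hax
  rw [zero_smul] at h
  refine h.congr fun n => ?_
  exact inv_smul_smul₀ (ha_pos n).ne' (x n)

/-- If `c • y` stays in a bounded set while `c → ∞`, then `√c • y → 0`. -/
theorem isMackeyNull_of_smul_mem_isVonNBounded {y : ℕ → E} {c : ℕ → ℝ} {S : Set E}
    (hc_pos : ∀ n, 0 < c n) (hc_mono : Monotone c) (hc_top : Tendsto c atTop atTop)
    (hS : Bornology.IsVonNBounded ℝ S) (hcy : ∀ n, c n • y n ∈ S) : IsMackeyNull y := by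
  set a : ℕ → ℝ := fun n => √(c n)
  have ha_pos : ∀ n, 0 < a n := fun n => Real.sqrt_pos.2 (hc_pos n)
  have ha_top : Tendsto a atTop atTop := Real.tendsto_sqrt_atTop.comp hc_top
  refine ⟨a, ha_pos, fun m n hmn => Real.sqrt_le_sqrt (hc_mono hmn), ha_top, ?_⟩
  have hay : ∀ n, a n • y n = (a n)⁻¹ • c n • y n := fun n => by
    rw [smul_smul, ← Real.mul_self_sqrt (hc_pos n).le, inv_mul_cancel_left₀ (ha_pos n).ne']
  simp only [hay]
  exact hS.smul_tendsto_zero (.of_forall hcy) (tendsto_inv_atTop_zero.comp ha_top)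

theorem Set.Infinite.exists_seq_mem_lt {S : Set ℕ} (hS : S.Infinite) (p : ℕ → ℕ) :
    ∃ n : ℕ → ℕ, (∀ j, n j ∈ S) ∧ ∀ j, p (n j) < n (j + 1) := by
  choose next hnext_mem hnext_gt using fun b => hS.exists_gt b
  refine ⟨fun j => Nat.rec (next 0) (fun _ prev => next (p prev)) j, fun j => ?_,
    fun j => hnext_gt _⟩
  cases j <;> exact hnext_mem _

variable [IsTopologicalAddGroup E] [ContinuousSMul ℝ E]

theorem PropertyAlpha4.exists_strictMono_isMackeyNull_comp (hα : PropertyAlpha4 E) {x : ℕ → E}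
    (hx : Tendsto x atTop (𝓝 0)) : ∃ ψ : ℕ → ℕ, StrictMono ψ ∧ IsMackeyNull (x ∘ ψ) := by
  set ξ : ℕ → ℕ → E := fun n k => ((n : ℝ) + 1) • x (k + n)
  have hξ : ∀ n, Tendsto (ξ n) atTop (𝓝 0) := fun n => by
    simpa using (hx.comp (tendsto_add_atTop_nat n)).const_smul ((n : ℝ) + 1)
  obtain ⟨σ, hσ, hS⟩ := hα ξ hξ
  choose! k m hkm using fun n (hn : n ∈ {n | ∃ k m, ξ n k = σ m}) => hn
  set p : ℕ → ℕ := fun n => k n + n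
  have hp : ∀ n, n ≤ p n := fun n => Nat.le_add_left n (k n)
  obtain ⟨n, hn_mem, hn_lt⟩ := hS.exists_seq_mem_lt p
  have hn : StrictMono n := strictMono_nat_of_lt_succ fun j => (hp _).trans_lt (hn_lt j)
  refine ⟨p ∘ n, strictMono_nat_of_lt_succ fun j => (hn_lt j).trans_le (hp _), ?_⟩
  refine isMackeyNull_of_smul_mem_isVonNBounded (c := fun j => (n j : ℝ) + 1)
    (fun j => by positivity) (fun i j hij => by simpa using hn.monotone hij)
    (tendsto_atTop_add_const_right _ 1 (tendsto_natCast_atTop_atTop.comp hn.tendsto_atTop))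
    (hσ.isVonNBounded_range ℝ) fun j => ⟨m (n j), (hkm _ (hn_mem j)).symm⟩

end MackeyNull

section PropertyK

variable {E : Type*} [AddCommGroup E] [Module ℝ E] [TopologicalSpace E]

theorem PropertyK.propertyMK [ContinuousSMul ℝ E] (hK : PropertyK E) : PropertyMK E :=
  fun x hx => hK x hx.tendsto_zero

theorem PropertyMK.propertyK (hMK : PropertyMK E)
    (hsub : ∀ x : ℕ → E, Tendsto x atTop (𝓝 0) → ∃ ψ : ℕ → ℕ, StrictMono ψ ∧ IsMackeyNull (x ∘ ψ)) :
    PropertyK E := by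
  intro x hx φ hφ
  obtain ⟨ψ, hψ, hxψ⟩ := hsub (x ∘ φ) (hx.comp hφ.tendsto_atTop)
  obtain ⟨χ, hχ, s, hs⟩ := hMK _ hxψ id strictMono_id
  exact ⟨ψ ∘ χ, hψ.comp hχ, s, hs⟩

end PropertyK

theorem stmt4 {E : Type*} [AddCommGroup E] [Module ℝ E] [TopologicalSpace E]
    [IsTopologicalAddGroup E] [ContinuousSMul ℝ E]
    (hα : ∀ ξ : ℕ → ℕ → E, (∀ n, Tendsto (ξ n) atTop (𝓝 (0 : E))) →
      ∃ σ : ℕ → E, Tendsto σ atTop (𝓝 (0 : E)) ∧ {n | ∃ k m, ξ n k = σ m}.Infinite) :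
    (∀ x : ℕ → E, Tendsto x atTop (𝓝 (0 : E)) →
      ∃ ψ : ℕ → ℕ, StrictMono ψ ∧ IsMackeyNull (x ∘ ψ)) ∧
    (PropertyK E ↔ PropertyMK E) := by
  have hα4 : PropertyAlpha4 E := hα
  have hsub := fun (x : ℕ → E) => hα4.exists_strictMono_isMackeyNull_comp (x := x)
  exact ⟨hsub, PropertyK.propertyMK, fun hMK => hMK.propertyK hsub⟩
end

section
/- Every feral topological vector space (one in which every bounded set is finite-dimensional) has the property (K): every null sequence is a K-sequence. -/
open Filter Topology

/-! A null sequence has bounded range, so in a feral space it lies in a finite-dimensional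
subspace, a copy of `ℝᵈ`. There every subsequence has a further subsequence with
`‖y k‖ ≤ 2⁻ᵏ`, whose series converges absolutely. -/

theorem IsKSequence.map {E F : Type*} [AddCommGroup E] [Module ℝ E] [TopologicalSpace E]
    [AddCommGroup F] [Module ℝ F] [TopologicalSpace F] {x : ℕ → E} (hx : IsKSequence x)
    (f : E →L[ℝ] F) : IsKSequence (f ∘ x) := by
  intro φ hφ
  obtain ⟨ψ, hψ, s, hs⟩ := hx φ hφ
  refine ⟨ψ, hψ, f s, ?_⟩
  simpa [Function.comp_def, map_sum] using (f.continuous.tendsto s).comp hs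

theorem propertyK_of_completeSpace {E : Type*} [NormedAddCommGroup E] [NormedSpace ℝ E]
    [CompleteSpace E] : PropertyK E := by
  intro x hx φ hφ
  have hnorm : Tendsto (fun k => ‖x (φ k)‖) atTop (𝓝 0) :=
    tendsto_zero_iff_norm_tendsto_zero.mp (hx.comp hφ.tendsto_atTop)
  obtain ⟨ψ, hψ, hψ_le⟩ := extraction_forall_of_eventually
    (P := fun n k => ‖x (φ k)‖ ≤ (1 / 2 : ℝ) ^ n)
    (fun n => hnorm.eventually (ge_mem_nhds (by positivity)))
  obtain ⟨s, hs⟩ := Summable.of_norm_bounded summable_geometric_two hψ_le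
  exact ⟨ψ, hψ, s, hs.tendsto_sum_nat⟩

theorem propertyK_of_finiteDimensional {E : Type*} [AddCommGroup E] [Module ℝ E]
    [TopologicalSpace E] [IsTopologicalAddGroup E] [ContinuousSMul ℝ E] [T2Space E]
    [FiniteDimensional ℝ E] : PropertyK E := by
  intro x hx
  let e : E ≃L[ℝ] (Fin (Module.finrank ℝ E) → ℝ) :=
    (Module.finBasis ℝ E).equivFun.toContinuousLinearEquiv
  have hex : Tendsto (e ∘ x) atTop (𝓝 0) := by
    simpa using (e.continuous.tendsto 0).comp hx
  simpa [Function.comp_def] using (propertyK_of_completeSpace _ hex).map (e.symm : _ →L[ℝ] E)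

theorem stmt5 {E : Type*} [AddCommGroup E] [Module ℝ E] [TopologicalSpace E]
    [IsTopologicalAddGroup E] [ContinuousSMul ℝ E] [T2Space E]
    (hferal : Feral E) : PropertyK E := by
  intro x hx
  let F := Submodule.span ℝ (Set.range x)
  have : FiniteDimensional ℝ F := hferal _ (hx.isVonNBounded_range ℝ)
  let y : ℕ → F := fun n => ⟨x n, Submodule.subset_span (Set.mem_range_self n)⟩
  have hy : Tendsto y atTop (𝓝 0) := IsEmbedding.subtypeVal.tendsto_nhds_iff.mpr hx
  exact (propertyK_of_finiteDimensional y hy).map F.subtypeL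
end

section
/- In a feral topological vector space, every closed bounded subset is compact; hence a feral Hausdorff topological vector space is quasi-complete. -/
open Filter Topology

open Bornology

theorem Bornology.IsVonNBounded.preimage_of_isInducing {𝕜 E F : Type*} [NormedDivisionRing 𝕜]
    [AddCommGroup E] [Module 𝕜 E] [TopologicalSpace E]
    [AddCommGroup F] [Module 𝕜 F] [TopologicalSpace F]
    {s : Set F} (hs : IsVonNBounded 𝕜 s) (f : E →ₗ[𝕜] F) (hf : IsInducing f) :
    IsVonNBounded 𝕜 (f ⁻¹' s) := by
  intro V hV
  rw [hf.nhds_eq_comap, map_zero] at hV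
  obtain ⟨U, hU, hUV⟩ := hV
  rw [absorbs_iff_eventually_nhdsNE_zero]
  filter_upwards [(hs hU).eventually_nhdsNE_zero] with c hc x hx
  exact hUV (by simpa using hc hx)

instance FiniteDimensional.montelSpace {𝕜 E : Type*} [NontriviallyNormedField 𝕜] [ProperSpace 𝕜]
    [AddCommGroup E] [Module 𝕜 E] [TopologicalSpace E] [IsTopologicalAddGroup E]
    [ContinuousSMul 𝕜 E] [T2Space E] [FiniteDimensional 𝕜 E] : MontelSpace 𝕜 E where
  heine_borel s hs hb := by
    let e : E ≃L[𝕜] (Fin (Module.finrank 𝕜 E) → 𝕜) :=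
      (Module.finBasis 𝕜 E).equivFun.toContinuousLinearEquiv
    rw [← e.toHomeomorph.isCompact_image]
    refine Metric.isCompact_of_isClosed_isBounded (e.toHomeomorph.isClosedMap _ hs) ?_
    rw [← NormedSpace.isVonNBounded_iff 𝕜]
    exact hb.image e.toContinuousLinearMap

/-- A closed bounded set `s` is compact inside the finite-dimensional subspace `span ℝ s`. -/
theorem Feral.montelSpace {E : Type*} [AddCommGroup E] [Module ℝ E] [TopologicalSpace E]
    [IsTopologicalAddGroup E] [ContinuousSMul ℝ E] [T2Space E] (hferal : Feral E) :
    MontelSpace ℝ E where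
  heine_borel s hs hb := by
    let p := Submodule.span ℝ s
    have : FiniteDimensional ℝ p := hferal s hb
    have hcpt : IsCompact (p.subtype ⁻¹' s) :=
      MontelSpace.isCompact_of_isClosed_of_isVonNBounded ℝ (hs.preimage continuous_subtype_val)
        (hb.preimage_of_isInducing p.subtype IsInducing.subtypeVal)
    have hs_range : s ⊆ Set.range p.subtype :=
      fun x hx ↦ ⟨⟨x, Submodule.subset_span hx⟩, rfl⟩
    rw [← Set.image_preimage_eq_of_subset hs_range]
    exact hcpt.image continuous_subtype_val

theorem stmt6 {E : Type*} [AddCommGroup E] [Module ℝ E] [UniformSpace E]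
    [IsUniformAddGroup E] [ContinuousSMul ℝ E] [T2Space E]
    (hferal : Feral E) :
    ∀ s : Set E, IsClosed s → Bornology.IsVonNBounded ℝ s → IsCompact s ∧ IsComplete s := by
  have := hferal.montelSpace
  intro s hs hb
  have hcpt := MontelSpace.isCompact_of_isClosed_of_isVonNBounded ℝ hs hb
  exact ⟨hcpt, hcpt.isComplete⟩
end

section
/- If L is a sequentially closed linear subspace of a topological vector space E with property (MK), then L has property (MK). -/
open Filter Topology

theorem stmt7_general {E : Type*} [AddCommGroup E] [Module ℝ E] [TopologicalSpace E]
    (L : Submodule ℝ E)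
    (hseq : ∀ x : ℕ → E, (∀ n, x n ∈ L) → ∀ y : E, Tendsto x atTop (𝓝 y) → y ∈ L)
    (hMK : PropertyMK E) :
    ∀ x : ℕ → E, (∀ n, x n ∈ L) → IsMackeyNull x →
      ∀ φ : ℕ → ℕ, StrictMono φ → ∃ ψ : ℕ → ℕ, StrictMono ψ ∧
        ∃ s ∈ L, Tendsto (fun N => ∑ k ∈ Finset.range N, x (φ (ψ k))) atTop (𝓝 s) := by
  intro x hxL hx φ hφ
  obtain ⟨ψ, hψ, s, hs⟩ := hMK x hx φ hφ
  have partialSums_mem (N : ℕ) : ∑ k ∈ Finset.range N, x (φ (ψ k)) ∈ L :=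
    L.sum_mem fun k _ => hxL (φ (ψ k))
  exact ⟨ψ, hψ, s, hseq _ partialSums_mem s hs, hs⟩

theorem stmt7 {E : Type*} [AddCommGroup E] [Module ℝ E] [TopologicalSpace E]
    [IsTopologicalAddGroup E] [ContinuousSMul ℝ E]
    (L : Submodule ℝ E)
    (hseq : ∀ x : ℕ → E, (∀ n, x n ∈ L) → ∀ y : E, Tendsto x atTop (𝓝 y) → y ∈ L)
    (hMK : PropertyMK E) :
    ∀ x : ℕ → E, (∀ n, x n ∈ L) → IsMackeyNull x →
      ∀ φ : ℕ → ℕ, StrictMono φ → ∃ ψ : ℕ → ℕ, StrictMono ψ ∧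
        ∃ s ∈ L, Tendsto (fun N => ∑ k ∈ Finset.range N, x (φ (ψ k))) atTop (𝓝 s) :=
  stmt7_general L hseq hMK
end

section
/- A topological vector space E is κ-Fréchet–Urysohn if and only if for every sequence (U_n) of open subsets of E with 0 ∈ closure(U_n) for all n, there exist a strictly increasing sequence (n_k) of naturals and points x_k ∈ U_{n_k} with x_k → 0. -/
/-! If `0` is the limit of points `xₙ` that are topologically distinguishable from `0`, glue
the translates `xₙ + Uₙ`, each cut down to a neighbourhood of `xₙ` whose closure misses `0`,
into one open set `A`. Then `0 ∈ closure A`, so some sequence `aⱼ ∈ xₘⱼ + Uₘⱼ` in `A` tends to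
`0`; the cut-downs force `mⱼ → ∞`, and `aⱼ - xₘⱼ ∈ Uₘⱼ` along a subsequence is the required
selection. In a vector space such `xₙ` are `v / (n + 1)` for any `v ∉ closure {0}`; if there is no
such `v` the topology is indiscrete and every sequence tends to `0`. -/

open Filter Topology

open Set

lemma tendsto_of_forall_mem_closure_singleton {X α : Type*} [TopologicalSpace X] [R0Space X]
    {p : X} (h : ∀ z, z ∈ closure {p}) (u : α → X) (l : Filter α) : Tendsto u l (𝓝 p) :=
  tendsto_nhds.2 fun _ hW hpW => univ_mem' fun a =>
    (specializes_iff_mem_closure.2 (h (u a))).symm.mem_open hW hpW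

lemma tendsto_atTop_of_mem_of_compl_mem_nhds {X : Type*} [TopologicalSpace X] {p : X}
    {s : ℕ → Set X} (hs : ∀ n, (s n)ᶜ ∈ 𝓝 p) {a : ℕ → X} (ha : Tendsto a atTop (𝓝 p))
    {m : ℕ → ℕ} (hm : ∀ j, a j ∈ s (m j)) : Tendsto m atTop atTop := by
  refine tendsto_atTop.2 fun N => ?_
  have hN : ⋂ n ∈ Iio N, (s n)ᶜ ∈ 𝓝 p := (biInter_mem (finite_Iio N)).2 fun n _ => hs n
  filter_upwards [ha hN] with j hj
  by_contra! hlt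
  exact mem_iInter₂.1 hj (m j) hlt (hm j)

lemma exists_isOpen_mem_compl_mem_nhds {X : Type*} [TopologicalSpace X] [R1Space X] {x p : X}
    (hx : x ∉ closure {p}) : ∃ s : Set X, IsOpen s ∧ x ∈ s ∧ sᶜ ∈ 𝓝 p := by
  have : Disjoint (𝓝 x) (𝓝 p) :=
    disjoint_nhds_nhds_iff_not_specializes.2 fun h => hx (specializes_iff_mem_closure.1 h.symm)
  obtain ⟨s, ⟨hxs, hs⟩, hs0⟩ := (nhds_basis_opens x).disjoint_iff_left.1 this
  exact ⟨s, hs, hxs, hs0⟩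

section TopologicalAddGroup

variable {G : Type*} [AddGroup G] [TopologicalSpace G] [IsTopologicalAddGroup G]

theorem KappaFrechetUrysohn.exists_strictMono_tendsto_zero (hG : KappaFrechetUrysohn G)
    {x : ℕ → G} (hx : Tendsto x atTop (𝓝 0)) (hx0 : ∀ n, x n ∉ closure {0})
    {U : ℕ → Set G} (hU : ∀ n, IsOpen (U n)) (hU0 : ∀ n, (0 : G) ∈ closure (U n)) :
    ∃ (nk : ℕ → ℕ) (y : ℕ → G), StrictMono nk ∧ (∀ k, y k ∈ U (nk k)) ∧
      Tendsto y atTop (𝓝 0) := by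
  choose s hs hxs hs0 using fun n => exists_isOpen_mem_compl_mem_nhds (hx0 n)
  set A : ℕ → Set G := fun n => s n ∩ (· - x n) ⁻¹' U n
  have hA : ∀ n, IsOpen (A n) := fun n => (hs n).inter ((hU n).preimage (continuous_sub_right _))
  have hxA : ∀ n, x n ∈ closure (A n) := fun n => (hs n).inter_closure ⟨hxs n, by
    change x n ∈ closure (Homeomorph.subRight (x n) ⁻¹' U n)
    rw [← Homeomorph.preimage_closure]
    simpa using hU0 n⟩
  have h0A : (0 : G) ∈ closure (⋃ n, A n) := isClosed_closure.mem_of_tendsto hx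
    (Eventually.of_forall fun n => closure_mono (subset_iUnion A n) (hxA n))
  obtain ⟨a, haA, ha⟩ := hG _ (isOpen_iUnion hA) 0 h0A
  choose m hm using fun j => mem_iUnion.1 (haA j)
  have hm_atTop : Tendsto m atTop atTop := tendsto_atTop_of_mem_of_compl_mem_nhds (s := A)
    (fun n => mem_of_superset (hs0 n) (compl_subset_compl.2 inter_subset_left)) ha hm
  obtain ⟨ψ, hψ, hmψ⟩ := strictMono_subseq_of_tendsto_atTop hm_atTop
  refine ⟨m ∘ ψ, fun k => a (ψ k) - x (m (ψ k)), hmψ, fun k => (hm (ψ k)).2, ?_⟩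
  simpa using (ha.comp hψ.tendsto_atTop).sub (hx.comp hmψ.tendsto_atTop)

theorem kappaFrechetUrysohn_of_forall_exists_tendsto_zero
    (h : ∀ U : Set G, IsOpen U → (0 : G) ∈ closure U →
      ∃ y : ℕ → G, (∀ k, y k ∈ U) ∧ Tendsto y atTop (𝓝 0)) :
    KappaFrechetUrysohn G := by
  intro U hU p hp
  obtain ⟨y, hyU, hy⟩ := h ((p + ·) ⁻¹' U) (hU.preimage (continuous_const_add p))
    (by
      change 0 ∈ closure (Homeomorph.addLeft p ⁻¹' U)
      rw [← Homeomorph.preimage_closure]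
      simpa using hp)
  exact ⟨fun k => p + y k, hyU, by simpa using hy.const_add p⟩

end TopologicalAddGroup

lemma exists_tendsto_zero_forall_notMem_closure_zero {E : Type*} [AddCommGroup E] [Module ℝ E]
    [TopologicalSpace E] [ContinuousAdd E] [ContinuousSMul ℝ E] {v : E}
    (hv : v ∉ closure {0}) :
    ∃ x : ℕ → E, Tendsto x atTop (𝓝 0) ∧ ∀ n, x n ∉ closure {0} := by
  refine ⟨fun n => (1 / ((n : ℝ) + 1)) • v, ?_, fun n hn => hv ?_⟩
  · simpa using (tendsto_one_div_add_atTop_nhds_zero_nat (𝕜 := ℝ)).smul_const v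
  · have hc : closure {0} = ((⊥ : Submodule ℝ E).topologicalClosure : Set E) := by simp
    rw [hc] at hn ⊢
    have := Submodule.smul_mem _ ((n : ℝ) + 1) hn
    rwa [smul_smul, mul_one_div_cancel (Nat.cast_add_one_ne_zero n), one_smul] at this

theorem stmt9 {E : Type*} [AddCommGroup E] [Module ℝ E] [TopologicalSpace E]
    [IsTopologicalAddGroup E] [ContinuousSMul ℝ E] :
    KappaFrechetUrysohn E ↔
    ∀ U : ℕ → Set E, (∀ n, IsOpen (U n)) → (∀ n, (0 : E) ∈ closure (U n)) →
      ∃ (nk : ℕ → ℕ) (x : ℕ → E), StrictMono nk ∧ (∀ k, x k ∈ U (nk k)) ∧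
        Tendsto x atTop (𝓝 (0 : E)) := by
  constructor
  · intro hE U hU hU0
    by_cases hind : ∀ z : E, z ∈ closure {0}
    · choose y hy using fun n => closure_nonempty_iff.1 ⟨0, hU0 n⟩
      exact ⟨id, y, strictMono_id, hy, tendsto_of_forall_mem_closure_singleton hind y atTop⟩
    · obtain ⟨v, hv⟩ := not_forall.1 hind
      obtain ⟨x, hx, hx0⟩ := exists_tendsto_zero_forall_notMem_closure_zero hv
      exact hE.exists_strictMono_tendsto_zero hx hx0 hU hU0
  · refine fun h => kappaFrechetUrysohn_of_forall_exists_tendsto_zero fun U hU hU0 => ?_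
    obtain ⟨-, y, -, hy, hy0⟩ := h (fun _ => U) (fun _ => hU) (fun _ => hU0)
    exact ⟨y, hy, hy0⟩
end

section
/- Every Fréchet–Urysohn topological vector space with property (K) is a Baire space. -/
open Filter Topology

/-!
If `E` is not Baire, homotheties spread a nonempty open meagre set over all of `E`, so `E` is
covered by closed sets `C j` with empty interior. Recursively choose closed neighbourhoods
`R (m + 1) + R (m + 1) ⊆ R m` of `0` and, by the Fréchet–Urysohn property, null sequences `w m` in
`R m` such that adding any `w m k` to a finite sum of earlier terms `w a b` (`a, b < m`) avoids
`C 0, …, C m`, while adding anything from `R (m + 1)` to such a sum keeps it outside every `C j`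
(`j ≤ m`) it already avoids. The Fréchet–Urysohn property also yields a null diagonal sequence
`w (a t) (b t)` with `a` growing fast, and property (K) a subseries converging to some `s`. If
`s ∈ C j`, the partial sum `Q` of the first `j + 1` terms avoids `C j`, while `s - Q`, a limit of
sums of later terms, lies in a closed `R (m + 1)` small enough that `s = Q + (s - Q)` avoids `C j`.
-/

open Set
open scoped Pointwise

theorem tendsto_nhds_of_eventually_inseparable {X ι : Type*} [TopologicalSpace X] {f : ι → X}
    {l : Filter ι} {a : X} (h : ∀ᶠ i in l, Inseparable (f i) a) : Tendsto f l (𝓝 a) :=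
  tendsto_nhds.2 fun _U hU ha => h.mono fun _i hi => (hi.mem_open_iff hU).2 ha

theorem inseparable_or_frequently_inseparable_of_tendsto_comp {X ι : Type*} [TopologicalSpace X]
    [R1Space X] {u : ℕ → X} {a b : X} (hu : Tendsto u atTop (𝓝 a)) {l : Filter ι} [l.NeBot]
    {k : ι → ℕ} (hk : Tendsto (u ∘ k) l (𝓝 b)) :
    Inseparable a b ∨ ∃ᶠ i in l, Inseparable (u (k i)) b := by
  by_cases hk_top : Tendsto k l atTop
  · exact .inl (tendsto_nhds_unique_inseparable (hu.comp hk_top) hk)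
  right
  obtain ⟨M, hM⟩ : ∃ M, ∃ᶠ i in l, k i < M := by
    simpa [tendsto_atTop, Filter.not_eventually] using hk_top
  obtain ⟨n, hn⟩ : ∃ n, ∃ᶠ i in l, k i = n := by
    by_contra! h
    exact hM (((Finset.range M).eventually_all.2 fun n _ => h n).mono
      fun i hi hiM => hi (k i) (Finset.mem_range.2 hiM) rfl)
  have := frequently_iff_neBot.1 hn
  have hconst : Tendsto (fun _ => u n) (l ⊓ 𝓟 {i | k i = n}) (𝓝 b) :=
    (hk.mono_left inf_le_left).congr' <| eventually_inf_principal.2 <| .of_forall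
      fun i hi => by simp [show k i = n from hi]
  exact hn.mono fun i hi => hi ▸ tendsto_nhds_unique_inseparable tendsto_const_nhds hconst

theorem exists_seq_tendsto_forall_mem_of_dense {X : Type*} [TopologicalSpace X]
    [FrechetUrysohnSpace X] {x : X} {N U : Set X} (hN : N ∈ 𝓝 x) (hU : Dense U) :
    ∃ u : ℕ → X, (∀ n, u n ∈ N ∩ U) ∧ Tendsto u atTop (𝓝 x) := by
  obtain ⟨u, hu, hux⟩ := mem_closure_iff_seq_limit.1 <|
    hU.open_subset_closure_inter isOpen_interior (mem_interior_iff_mem_nhds.2 hN)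
  exact ⟨u, fun n => ⟨interior_subset (hu n).1, (hu n).2⟩, hux⟩

theorem tendsto_atTop_fst_of_tendsto_comp {X : Type*} [TopologicalSpace X] [R1Space X]
    {f : ℕ × ℕ → X} {c : ℕ → X} {b : X} (hrow : ∀ n, Tendsto (fun k => f (n, k)) atTop (𝓝 (c n)))
    (hc : ∀ n, ¬Inseparable (c n) b) {q : ℕ → ℕ × ℕ} (hq : ∀ j, ¬Inseparable (f (q j)) b)
    (hfq : Tendsto (f ∘ q) atTop (𝓝 b)) : Tendsto (fun j => (q j).1) atTop atTop := by
  have hrow_finite : ∀ n, ¬∃ᶠ j in atTop, (q j).1 = n := by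
    intro n hfreq
    have := frequently_iff_neBot.1 hfreq
    have hk : Tendsto ((fun k => f (n, k)) ∘ fun j => (q j).2) (atTop ⊓ 𝓟 {j | (q j).1 = n})
        (𝓝 b) := by
      refine (hfq.mono_left inf_le_left).congr' <| eventually_inf_principal.2 <| .of_forall
        fun j hj => ?_
      rw [Function.comp_apply, ← show (q j).1 = n from hj]
      rfl
    rcases inseparable_or_frequently_inseparable_of_tendsto_comp (hrow n) hk with h | h
    · exact hc n h
    · obtain ⟨j, hj_insep, hjn⟩ := (h.and_eventually (eventually_inf_principal.2 (.of_forall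
        fun j hj => hj))).exists
      exact hq j (by rwa [← show (q j).1 = n from hjn] at hj_insep)
  refine tendsto_atTop.2 fun M => ?_
  filter_upwards [(Finset.range M).eventually_all.2 fun n _ =>
    Filter.not_frequently.1 (hrow_finite n)] with j hj
  by_contra! hjM
  exact hj _ (Finset.mem_range.2 hjM) rfl

section Diagonal

variable {E : Type*} [AddCommGroup E] [Module ℝ E] [TopologicalSpace E]
  [IsTopologicalAddGroup E] [ContinuousSMul ℝ E] [FrechetUrysohnSpace E]

theorem exists_tendsto_atTop_tendsto_zero_diagonal (w : ℕ → ℕ → E)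
    (hw : ∀ m, Tendsto (w m) atTop (𝓝 0)) :
    ∃ μ κ : ℕ → ℕ, Tendsto μ atTop atTop ∧ Tendsto (fun j => w (μ j) (κ j)) atTop (𝓝 0) := by
  by_cases h_indiscrete : ∀ d : E, Inseparable d 0
  · exact ⟨id, 0, tendsto_id,
      tendsto_nhds_of_eventually_inseparable (.of_forall fun _ => h_indiscrete _)⟩
  obtain ⟨d, hd⟩ := not_forall.1 h_indiscrete
  -- Row `n` is shifted by `ds n`, which tends to `0` but is not inseparable from it: a sequence of
  -- shifted points tending to `0` must leave every row, and removing the shifts gives the diagonal.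
  set ds : ℕ → E := fun n => ((n : ℝ) + 1)⁻¹ • d
  have hds : Tendsto ds atTop (𝓝 0) := by
    simpa using (tendsto_one_div_add_atTop_nhds_zero_nat (𝕜 := ℝ)).smul_const d
  have hds_sep : ∀ n, ¬Inseparable (ds n) 0 := fun n hn =>
    hd (by simpa [ds, smul_smul, Nat.cast_add_one_ne_zero] using hn.const_smul ((n : ℝ) + 1))
  set f : ℕ × ℕ → E := fun q => ds q.1 + w q.1 q.2
  have hrow : ∀ n, Tendsto (fun k => f (n, k)) atTop (𝓝 (ds n)) := fun n => by
    simpa using tendsto_const_nhds.add (hw n)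
  have h0 : (0 : E) ∈ closure (f '' {q | ¬Inseparable (f q) 0}) := by
    refine mem_closure_iff_nhds.2 fun o ho => ?_
    obtain ⟨V, hV, hVV⟩ := exists_nhds_zero_half ho
    obtain ⟨n, hn⟩ := (hds.eventually hV).exists
    have hsep : ∃ᶠ k in atTop, ¬Inseparable (f (n, k)) 0 := fun hev =>
      hds_sep n (tendsto_nhds_unique_inseparable (hrow n)
        (tendsto_nhds_of_eventually_inseparable (hev.mono fun _ => not_not.1)))
    obtain ⟨k, hk, hkV⟩ := (hsep.and_eventually ((hw n).eventually hV)).exists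
    exact ⟨f (n, k), hVV _ hn _ hkV, (n, k), hk, rfl⟩
  obtain ⟨x, hxS, hx⟩ := mem_closure_iff_seq_limit.1 h0
  choose q hqS hqx using hxS
  have hμ : Tendsto (fun j => (q j).1) atTop atTop :=
    tendsto_atTop_fst_of_tendsto_comp hrow hds_sep hqS (by simpa [Function.comp_def, hqx] using hx)
  refine ⟨fun j => (q j).1, fun j => (q j).2, hμ, ?_⟩
  have : Tendsto (fun j => x j - ds (q j).1) atTop (𝓝 0) := by
    simpa using hx.sub (hds.comp hμ)
  refine this.congr fun j => ?_
  simp [← hqx j, f]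

theorem exists_sparse_diagonal (w : ℕ → ℕ → E) (hw : ∀ m, Tendsto (w m) atTop (𝓝 0)) :
    ∃ a b : ℕ → ℕ, (∀ i t, i < t → a i + 2 < a t ∧ b i + 2 < a t) ∧
      Tendsto (fun t => w (a t) (b t)) atTop (𝓝 0) := by
  obtain ⟨μ, κ, hμ, hdiag⟩ := exists_tendsto_atTop_tendsto_zero_diagonal w hw
  obtain ⟨f, -, hf⟩ := exists_seq_of_forall_finset_exists (fun _ => True)
    (fun i t => i < t ∧ μ i + 2 < μ t ∧ κ i + 2 < μ t) fun s _ => by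
      obtain ⟨y, hy⟩ := (s.eventually_all.2 fun i _ => (eventually_gt_atTop i).and
        ((hμ.eventually_gt_atTop (μ i + 2)).and (hμ.eventually_gt_atTop (κ i + 2)))).exists
      exact ⟨y, trivial, hy⟩
  exact ⟨μ ∘ f, κ ∘ f, fun i t h => (hf i t h).2,
    hdiag.comp (StrictMono.tendsto_atTop fun i t h => (hf i t h).1)⟩

end Diagonal

section Subsums

variable {M : Type*} [AddCommMonoid M]

def subsums (w : ℕ → ℕ → M) (m : ℕ) : Set M :=
  {p | ∃ G ⊆ Finset.range m ×ˢ Finset.range m, ∑ ab ∈ G, w ab.1 ab.2 = p}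

theorem finite_subsums (w : ℕ → ℕ → M) (m : ℕ) : (subsums w m).Finite :=
  ((Finset.range m ×ˢ Finset.range m).powerset.finite_toSet.image
    fun G => ∑ ab ∈ G, w ab.1 ab.2).subset fun _p ⟨G, hG, hp⟩ => ⟨G, Finset.mem_powerset.2 hG, hp⟩

theorem subsums_congr {w w' : ℕ → ℕ → M} {m : ℕ} (h : ∀ a < m, w a = w' a) :
    subsums w m = subsums w' m := by
  ext p
  refine exists_congr fun G => and_congr_right fun hG => ?_
  rw [Finset.sum_congr rfl fun ab hab =>
    congrFun (h _ (Finset.mem_range.1 (Finset.mem_product.1 (hG hab)).1)) ab.2]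

theorem sum_range_mem_subsums (w : ℕ → ℕ → M) {a b : ℕ → ℕ} (ha : StrictMono a) {n m : ℕ}
    (h : ∀ k < n, a k < m ∧ b k < m) :
    ∑ k ∈ Finset.range n, w (a k) (b k) ∈ subsums w m := by
  classical
  refine ⟨(Finset.range n).image fun k => (a k, b k), fun ab hab => ?_, ?_⟩
  · obtain ⟨k, hk, rfl⟩ := Finset.mem_image.1 hab
    simpa using h k (Finset.mem_range.1 hk)
  · rw [Finset.sum_image fun k _ l _ hkl => ha.injective (congrArg Prod.fst hkl)]

end Subsums

section AvoidingSteps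

variable {E : Type*} [AddCommGroup E] [TopologicalSpace E] [IsTopologicalAddGroup E]
  {C : ℕ → Set E}

theorem exists_tendsto_zero_add_notMem [FrechetUrysohnSpace E] (hCc : ∀ n, IsClosed (C n))
    (hCi : ∀ n, interior (C n) = ∅) (m : ℕ) {R : Set E} (hR : R ∈ 𝓝 0) {Φ : Set E}
    (hΦ : Φ.Finite) : ∃ w : ℕ → E, Tendsto w atTop (𝓝 0) ∧
      ∀ k, w k ∈ R ∧ ∀ j ≤ m, ∀ p ∈ Φ, w k + p ∉ C j := by
  set 𝒰 : Set (Set E) := (fun q : ℕ × E => (· + q.2) ⁻¹' (C q.1)ᶜ) '' (Iic m ×ˢ Φ)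
  have h𝒰 : 𝒰.Finite := ((finite_Iic m).prod hΦ).image _
  obtain ⟨w, hw, hw0⟩ := exists_seq_tendsto_forall_mem_of_dense hR <| h𝒰.dense_sInter
      (forall_mem_image.2 fun q _ => (hCc q.1).isOpen_compl.preimage (continuous_add_const q.2))
      (forall_mem_image.2 fun q _ =>
        (interior_eq_empty_iff_dense_compl.1 (hCi q.1)).preimage (isOpenMap_add_right q.2))
  exact ⟨w, hw0, fun k => ⟨(hw k).1, fun j hj p hp =>
    (hw k).2 _ (mem_image_of_mem _ (mk_mem_prod (mem_Iic.2 hj) hp))⟩⟩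

theorem exists_closed_nhds_zero_add_subset_add_notMem (hCc : ∀ n, IsClosed (C n)) (m : ℕ)
    {R : Set E} (hR : R ∈ 𝓝 0) {Φ : Set E} (hΦ : Φ.Finite) :
    ∃ R' ∈ 𝓝 (0 : E), IsClosed R' ∧ R' + R' ⊆ R ∧
      ∀ j ≤ m, ∀ p ∈ Φ, p ∉ C j → ∀ x ∈ R', p + x ∉ C j := by
  have hA : R ∩ {x | ∀ j ∈ Iic m, ∀ p ∈ Φ, p ∉ C j → p + x ∉ C j} ∈ 𝓝 (0 : E) := by
    refine inter_mem hR <| (finite_Iic m).eventually_all.2 fun j _ =>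
      hΦ.eventually_all.2 fun p _ => eventually_imp_distrib_left.2 fun hp => ?_
    exact (continuous_const_add p).continuousAt.preimage_mem_nhds
      ((hCc j).isOpen_compl.mem_nhds (by simpa using hp))
  obtain ⟨V, hV, hVc, -, hVV⟩ := exists_closed_nhds_zero_neg_eq_add_subset hA
  refine ⟨V, hV, hVc, hVV.trans inter_subset_left, fun j hj p hp hpC x hx => ?_⟩
  have hxA := hVV (add_mem_add hx (mem_of_mem_nhds hV))
  rw [add_zero] at hxA
  exact hxA.2 j (mem_Iic.2 hj) p hp hpC

end AvoidingSteps

structure AvoidingSystem {E : Type*} [AddCommGroup E] [TopologicalSpace E]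
    (C : ℕ → Set E) where
  R : ℕ → Set E
  w : ℕ → ℕ → E
  zero_mem : ∀ m, (0 : E) ∈ R m
  isClosed : ∀ m, IsClosed (R m)
  add_subset : ∀ m, R (m + 1) + R (m + 1) ⊆ R m
  tendsto_zero : ∀ m, Tendsto (w m) atTop (𝓝 0)
  mem : ∀ m k, w m k ∈ R m
  add_notMem : ∀ m k, ∀ j ≤ m, ∀ p ∈ subsums w m, w m k + p ∉ C j
  add_notMem_of_notMem : ∀ m, ∀ j ≤ m, ∀ p ∈ subsums w m, p ∉ C j → ∀ x ∈ R (m + 1), p + x ∉ C j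

namespace AvoidingSystem

section Properties

variable {E : Type*} [AddCommGroup E] [TopologicalSpace E] {C : ℕ → Set E}
  (S : AvoidingSystem C)

theorem antitone : Antitone S.R :=
  antitone_nat_of_succ_le fun m x hx => by
    simpa using S.add_subset m (add_mem_add hx (S.zero_mem (m + 1)))

theorem sum_Ico_mem {a : ℕ → ℕ} (ha : StrictMono a) (b : ℕ → ℕ) (d : ℕ) :
    ∀ p n, n < a p → ∑ k ∈ Finset.Ico p (p + d), S.w (a k) (b k) ∈ S.R n := by
  induction d with
  | zero => simpa using fun _ n _ => S.zero_mem n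
  | succ d ih =>
    intro p n hn
    rw [Finset.sum_eq_sum_Ico_succ_bot (by omega), show p + (d + 1) = p + 1 + d by omega]
    exact S.add_subset n <| add_mem_add (S.antitone hn (S.mem _ _))
      (ih (p + 1) (n + 1) (by have := ha (p.lt_add_one); omega))

theorem limit_notMem [ContinuousSub E] {a b : ℕ → ℕ}
    (hab : ∀ i t, i < t → a i + 2 < a t ∧ b i + 2 < a t) {s : E}
    (hs : Tendsto (fun N => ∑ k ∈ Finset.range N, S.w (a k) (b k)) atTop (𝓝 s)) (j : ℕ) :
    s ∉ C j := by
  have ha : StrictMono a := fun i t h => by have := (hab i t h).1; omega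
  set Q := ∑ k ∈ Finset.range (j + 1), S.w (a k) (b k)
  have hj : j ≤ a j := ha.id_le j
  have hgap := (hab j _ j.lt_add_one).1
  obtain ⟨m, hm⟩ : ∃ m, a (j + 1) = m + 2 := ⟨a (j + 1) - 2, by omega⟩
  have hQ : Q ∉ C j := by
    rw [show Q = S.w (a j) (b j) + ∑ k ∈ Finset.range j, S.w (a k) (b k) from
      (Finset.sum_range_succ _ _).trans (add_comm _ _)]
    exact S.add_notMem _ _ j hj _ (sum_range_mem_subsums S.w ha fun k hk =>
      ⟨ha hk, by have := (hab k j hk).2; omega⟩)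
  have hQm : Q ∈ subsums S.w m := sum_range_mem_subsums S.w ha fun k hk => by
    have := hab k (j + 1) hk; omega
  have htail : s - Q ∈ S.R (m + 1) := by
    refine (S.isClosed _).mem_of_tendsto (hs.sub_const Q) ?_
    filter_upwards [eventually_ge_atTop (j + 1)] with N hN
    rw [← Finset.sum_range_add_sum_Ico _ hN, add_sub_cancel_left, ← Nat.add_sub_cancel' hN]
    exact S.sum_Ico_mem ha b _ _ _ (by omega)
  simpa using S.add_notMem_of_notMem m j (by omega) Q hQm hQ _ htail

end Properties

section Construction

variable {E : Type*} [AddCommGroup E] [TopologicalSpace E] [IsTopologicalAddGroup E]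
  [FrechetUrysohnSpace E] {C : ℕ → Set E} (hCc : ∀ n, IsClosed (C n))
  (hCi : ∀ n, interior (C n) = ∅)

noncomputable def stage : ℕ → {R : Set E // R ∈ 𝓝 0} × (ℕ → ℕ → E)
  | 0 => (⟨univ, univ_mem⟩, 0)
  | m + 1 =>
    have hR' := exists_closed_nhds_zero_add_subset_add_notMem hCc m (stage m).1.2
      (finite_subsums (stage m).2 m)
    have hw := exists_tendsto_zero_add_notMem hCc hCi m (stage m).1.2
      (finite_subsums (stage m).2 m)
    (⟨hR'.choose, hR'.choose_spec.1⟩, Function.update (stage m).2 m hw.choose)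

theorem stage_snd_of_lt : ∀ m, ∀ a < m, (stage hCc hCi m).2 a = (stage hCc hCi (a + 1)).2 a
  | 0, _, h => absurd h (Nat.not_lt_zero _)
  | m + 1, a, h => by
    rcases Nat.lt_succ_iff_lt_or_eq.1 h with h | rfl
    · exact (Function.update_of_ne h.ne _ _).trans (stage_snd_of_lt m a h)
    · rfl

theorem subsums_stage (m : ℕ) :
    subsums (stage hCc hCi m).2 m = subsums (fun a => (stage hCc hCi (a + 1)).2 a) m :=
  subsums_congr (stage_snd_of_lt hCc hCi m)

noncomputable def ofClosedInteriorEmpty : AvoidingSystem C where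
  R m := (stage hCc hCi m).1
  w m := (stage hCc hCi (m + 1)).2 m
  zero_mem m := mem_of_mem_nhds (stage hCc hCi m).1.2
  isClosed
    | 0 => isClosed_univ
    | m + 1 => (exists_closed_nhds_zero_add_subset_add_notMem hCc m (stage hCc hCi m).1.2
        (finite_subsums (stage hCc hCi m).2 m)).choose_spec.2.1
  add_subset m := (exists_closed_nhds_zero_add_subset_add_notMem hCc m (stage hCc hCi m).1.2
        (finite_subsums (stage hCc hCi m).2 m)).choose_spec.2.2.1
  tendsto_zero m := by
    simpa [stage] using (exists_tendsto_zero_add_notMem hCc hCi m (stage hCc hCi m).1.2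
      (finite_subsums (stage hCc hCi m).2 m)).choose_spec.1
  mem m k := by
    simpa [stage] using ((exists_tendsto_zero_add_notMem hCc hCi m (stage hCc hCi m).1.2
      (finite_subsums (stage hCc hCi m).2 m)).choose_spec.2 k).1
  add_notMem m k := by
    rw [← subsums_stage]
    simpa [stage] using ((exists_tendsto_zero_add_notMem hCc hCi m (stage hCc hCi m).1.2
      (finite_subsums (stage hCc hCi m).2 m)).choose_spec.2 k).2
  add_notMem_of_notMem m := by
    rw [← subsums_stage]
    exact (exists_closed_nhds_zero_add_subset_add_notMem hCc m (stage hCc hCi m).1.2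
      (finite_subsums (stage hCc hCi m).2 m)).choose_spec.2.2.2

end Construction

end AvoidingSystem

theorem baireSpace_of_forall_exists_forall_notMem {E : Type*} [AddCommGroup E] [Module ℝ E]
    [TopologicalSpace E] [IsTopologicalAddGroup E] [ContinuousSMul ℝ E]
    (h : ∀ C : ℕ → Set E, (∀ n, IsClosed (C n)) → (∀ n, interior (C n) = ∅) →
      ∃ x, ∀ n, x ∉ C n) :
    BaireSpace E := by
  refine ⟨fun f hfo hfd => fun v₀ => by_contra fun hv₀ => ?_⟩
  let φ : ℕ → E ≃ₜ E := fun m =>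
    (Homeomorph.smulOfNeZero ((m : ℝ) + 1)⁻¹ (by positivity)).trans (Homeomorph.addRight v₀)
  obtain ⟨x, hx⟩ := h (fun i => φ i.unpair.1 ⁻¹' (f i.unpair.2)ᶜ)
    (fun i => (hfo _).isClosed_compl.preimage (φ _).continuous)
    (fun i => by rw [← Homeomorph.preimage_interior, interior_compl, (hfd _).closure_eq,
      compl_univ, preimage_empty])
  have hφx : Tendsto (fun m => φ m x) atTop (𝓝 v₀) := by
    simpa [φ] using ((tendsto_one_div_add_atTop_nhds_zero_nat (𝕜 := ℝ)).smul_const x).add_const v₀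
  obtain ⟨m, hm⟩ := (hφx.eventually (isClosed_closure.isOpen_compl.mem_nhds hv₀)).exists
  obtain ⟨n, hn⟩ : ∃ n, φ m x ∉ f n := by
    by_contra! hmem
    exact hm (subset_closure (mem_iInter.2 hmem))
  exact hx (Nat.pair m n) (by simpa using hn)

theorem stmt13 {E : Type*} [AddCommGroup E] [Module ℝ E] [TopologicalSpace E]
    [IsTopologicalAddGroup E] [ContinuousSMul ℝ E] [FrechetUrysohnSpace E]
    (hK : PropertyK E) : BaireSpace E := by
  refine baireSpace_of_forall_exists_forall_notMem fun C hCc hCi => ?_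
  let S := AvoidingSystem.ofClosedInteriorEmpty hCc hCi
  obtain ⟨a, b, hab, hv⟩ := exists_sparse_diagonal S.w S.tendsto_zero
  obtain ⟨ψ, hψ, s, hs⟩ := hK _ hv id strictMono_id
  exact ⟨s, S.limit_notMem (fun i t h => hab _ _ (hψ h)) hs⟩
end

section
/- Let A be an infinite set and E a dense linear subspace of ℝ^A. If E is feral (every bounded subset of E is contained in a finite-dimensional subspace), then E is not κ-Fréchet–Urysohn. -/
open Filter Topology

/-!
Fix distinct points `a₀, a₁, …` of `A` and put `tₙ = 2⁻⁽ⁿ⁺¹⁾`. The box `Uₙ` of functions `x` with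
`|x(aᵢ) - tₙ^(i+1)| < tₙ^(n+2)` for `i ≤ n` is open and contains the moment-curve point
`(tₙ, tₙ², …)`; these points tend to `0`, so by density `0` is in the closure of `E ∩ ⋃ Uₙ`.
A sequence of `E ∩ ⋃ Uₙ` tending to `0` is bounded, hence spans a subspace `F` of some finite
dimension `d`, and it visits boxes `Uₙ` with `n → ∞` because `x(aₙ)` is bounded below on `Uₙ`.
Restricting `F` to `a₀, …, a_d` gives a proper subspace of `ℝ^(d+1)`, which every small
perturbation of `(t, t², …, t^(d+1))` avoids once `t` is small: in a functional vanishing on it,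
the lowest-index nonzero coefficient `c_j` contributes `c_j t^(j+1)`, and all other terms are
`O(t^(j+2))`.
-/

open Set Submodule

theorem eventually_sum_mul_ne_zero_near_moment {m : ℕ} {c : Fin m → ℝ} (hc : c ≠ 0) :
    ∀ᶠ s in 𝓝[>] (0 : ℝ), ∀ y : Fin m → ℝ,
      (∀ i : Fin m, |y i - s ^ ((i : ℕ) + 1)| ≤ s ^ (m + 1)) → ∑ i, y i * c i ≠ 0 := by
  obtain ⟨j, hj, hlow⟩ : ∃ j, c j ≠ 0 ∧ ∀ i < j, c i = 0 := by
    obtain ⟨i, hi⟩ := Function.ne_iff.1 hc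
    obtain ⟨j, hj, hmin⟩ := wellFounded_lt.has_min {i | c i ≠ 0} ⟨i, hi⟩
    exact ⟨j, hj, fun i hij => by_contra fun h => hmin i h hij⟩
  set C := ∑ i, |c i|
  have hsmall : ∀ᶠ s in 𝓝[>] (0 : ℝ), s < 1 ∧ 2 * C * s < |c j| := by
    refine eventually_nhdsWithin_of_eventually_nhds ((gt_mem_nhds one_pos).and ?_)
    exact ((continuous_const.mul continuous_id).tendsto' 0 0 (by simp)).eventually
      (gt_mem_nhds (abs_pos.2 hj))
  filter_upwards [self_mem_nhdsWithin, hsmall] with s (hs : 0 < s) ⟨hs1, hsC⟩ y hy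
  have hterm : ∀ i, |(y i - if i = j then s ^ ((j : ℕ) + 1) else 0) * c i|
      ≤ 2 * s ^ ((j : ℕ) + 2) * |c i| := by
    intro i
    rw [abs_mul]
    rcases eq_or_ne (c i) 0 with hci | hci
    · simp [hci]
    refine mul_le_mul_of_nonneg_right ?_ (abs_nonneg _)
    have hji : j ≤ i := not_lt.1 fun h => hci (hlow i h)
    have hmj : s ^ (m + 1) ≤ s ^ ((j : ℕ) + 2) := pow_le_pow_of_le_one hs.le hs1.le (by omega)
    have hyi := abs_le.1 (hy i)
    rcases hji.eq_or_lt with rfl | hlt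
    · rw [if_pos rfl, abs_le]
      constructor <;> nlinarith [pow_pos hs ((j : ℕ) + 2)]
    · have hij : s ^ ((i : ℕ) + 1) ≤ s ^ ((j : ℕ) + 2) :=
        pow_le_pow_of_le_one hs.le hs1.le (by have := Fin.lt_def.1 hlt; omega)
      rw [if_neg hlt.ne', sub_zero, abs_le]
      constructor <;> nlinarith [pow_pos hs ((i : ℕ) + 1)]
  have hsum : ∑ i, y i * c i = s ^ ((j : ℕ) + 1) * c j
      + ∑ i, (y i - if i = j then s ^ ((j : ℕ) + 1) else 0) * c i := by
    simp [sub_mul, Finset.sum_sub_distrib, ite_mul]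
  have hbound : |∑ i, (y i - if i = j then s ^ ((j : ℕ) + 1) else 0) * c i|
      < |s ^ ((j : ℕ) + 1) * c j| := calc
    _ ≤ ∑ i, 2 * s ^ ((j : ℕ) + 2) * |c i| :=
      (Finset.abs_sum_le_sum_abs _ _).trans (Finset.sum_le_sum fun i _ => hterm i)
    _ = s ^ ((j : ℕ) + 1) * (2 * C * s) := by rw [← Finset.mul_sum]; ring
    _ < s ^ ((j : ℕ) + 1) * |c j| := mul_lt_mul_of_pos_left hsC (by positivity)
    _ = |s ^ ((j : ℕ) + 1) * c j| := by rw [abs_mul, abs_of_pos (pow_pos hs _)]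
  rw [hsum]
  intro h
  rw [eq_neg_of_add_eq_zero_right h, abs_neg] at hbound
  exact lt_irrefl _ hbound

theorem eventually_notMem_of_near_moment {m : ℕ} {W : Submodule ℝ (Fin m → ℝ)} (hW : W ≠ ⊤) :
    ∀ᶠ s in 𝓝[>] (0 : ℝ), ∀ y : Fin m → ℝ,
      (∀ i : Fin m, |y i - s ^ ((i : ℕ) + 1)| ≤ s ^ (m + 1)) → y ∉ W := by
  classical
  obtain ⟨f, hf, hWf⟩ := W.exists_le_ker_of_lt_top hW.lt_top
  set c : Fin m → ℝ := fun i => f fun j => if i = j then 1 else 0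
  have hfc : ∀ y, f y = ∑ i, y i * c i := fun y => f.pi_apply_eq_sum_univ y
  have hc : c ≠ 0 := fun hc => hf <| LinearMap.ext fun y => by simp [hfc, hc]
  filter_upwards [eventually_sum_mul_ne_zero_near_moment hc] with s hs y hy hyW
  exact hs y hy ((hfc y).symm.trans (hWf hyW))

section MomentBox

variable {A : Type*} (a : ℕ → A)

noncomputable def momentPoint (s : ℝ) : A → ℝ :=
  Function.extend a (fun i => s ^ (i + 1)) 0

def momentBox (s : ℝ) (n : ℕ) : Set (A → ℝ) :=
  {x | ∀ i ≤ n, |x (a i) - s ^ (i + 1)| < s ^ (n + 2)}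

theorem continuous_momentPoint : Continuous (momentPoint a) := by
  classical
  refine continuous_pi fun x => ?_
  simp only [momentPoint, Function.extend_def]
  split_ifs
  · fun_prop
  · exact continuous_const

theorem momentPoint_zero : momentPoint a 0 = 0 := by
  simp only [momentPoint, ne_eq, Nat.add_one_ne_zero, not_false_eq_true, zero_pow]
  exact Function.extend_zero a

variable {a} in
theorem momentPoint_mem_momentBox (ha : Function.Injective a) {s : ℝ} (hs : 0 < s)
    (n : ℕ) : momentPoint a s ∈ momentBox a s n := fun i _ => by
  simp [momentPoint, ha.extend_apply, pow_pos hs]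

theorem isOpen_momentBox (s : ℝ) (n : ℕ) : IsOpen (momentBox a s n) := by
  simp only [momentBox, ofPred_forall]
  exact (finite_le_nat n).isOpen_biInter fun i _ =>
    isOpen_lt (by fun_prop) continuous_const

variable {a} in
theorem zero_mem_closure_iUnion_momentBox (ha : Function.Injective a) {t : ℕ → ℝ}
    (ht : Tendsto t atTop (𝓝[>] 0)) : (0 : A → ℝ) ∈ closure (⋃ n, momentBox a (t n) n) := by
  have hlim : Tendsto (fun n => momentPoint a (t n)) atTop (𝓝 0) := by
    simpa [momentPoint_zero, Function.comp_def] using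
      ((continuous_momentPoint a).tendsto 0).comp (tendsto_nhds_of_tendsto_nhdsWithin ht)
  refine mem_closure_of_tendsto hlim ?_
  filter_upwards [ht.eventually self_mem_nhdsWithin] with n hn
  exact mem_iUnion.2 ⟨n, momentPoint_mem_momentBox ha hn n⟩

theorem sub_pow_lt_of_mem_momentBox {s : ℝ} {n : ℕ} {x : A → ℝ} (hx : x ∈ momentBox a s n) :
    s ^ (n + 1) - s ^ (n + 2) < x (a n) := by
  linarith [(abs_lt.1 (hx n le_rfl)).1]

theorem tendsto_atTop_of_mem_momentBox {t : ℕ → ℝ} (ht : ∀ n, t n ∈ Ioo 0 1)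
    {u : ℕ → A → ℝ} (hu : Tendsto u atTop (𝓝 0)) {n : ℕ → ℕ}
    (hun : ∀ k, u k ∈ momentBox a (t (n k)) (n k)) : Tendsto n atTop atTop := by
  have hne : ∀ i, ∀ᶠ k in atTop, n k ≠ i := by
    intro i
    have hgap : 0 < t i ^ (i + 1) - t i ^ (i + 2) :=
      sub_pos.2 (pow_lt_pow_right_of_lt_one₀ (ht i).1 (ht i).2 (by omega))
    have hcoord : Tendsto (fun k => u k (a i)) atTop (𝓝 0) :=
      ((continuous_apply (a i)).tendsto 0).comp hu
    filter_upwards [hcoord.eventually (gt_mem_nhds hgap)] with k hk hki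
    exact (sub_pow_lt_of_mem_momentBox a (hki ▸ hun k)).not_gt hk
  refine tendsto_atTop.2 fun N => ?_
  filter_upwards [(eventually_all_finite (finite_lt_nat N)).2 fun i _ => hne i] with k hk
  by_contra! h
  exact hk (n k) h rfl

theorem eventually_disjoint_momentBox {t : ℕ → ℝ} (ht : Tendsto t atTop (𝓝[>] 0))
    (F : Submodule ℝ (A → ℝ)) [FiniteDimensional ℝ F] :
    ∀ᶠ n in atTop, Disjoint (momentBox a (t n) n) F := by
  set d := Module.finrank ℝ F
  set π := LinearMap.funLeft ℝ ℝ (fun i : Fin (d + 1) => a i)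
  have hW : F.map π ≠ ⊤ := by
    intro h
    have := Submodule.finrank_map_le π F
    rw [h, finrank_top, Module.finrank_fin_fun] at this
    omega
  have hsmall : ∀ᶠ s in 𝓝[>] (0 : ℝ), s < 1 ∧ ∀ y : Fin (d + 1) → ℝ,
      (∀ i : Fin (d + 1), |y i - s ^ ((i : ℕ) + 1)| ≤ s ^ (d + 1 + 1)) → y ∉ F.map π :=
    (eventually_nhdsWithin_of_eventually_nhds (gt_mem_nhds one_pos)).and
      (eventually_notMem_of_near_moment hW)
  filter_upwards [ht.eventually hsmall, ht.eventually self_mem_nhdsWithin,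
    eventually_ge_atTop d] with n ⟨hn1, hnW⟩ (hn0 : 0 < t n) hdn
  refine Set.disjoint_left.2 fun x hx hxF => hnW (π x) (fun i => ?_) (mem_map_of_mem hxF)
  calc |π x i - t n ^ ((i : ℕ) + 1)| ≤ t n ^ (n + 2) := (hx i (by omega)).le
    _ ≤ t n ^ (d + 1 + 1) := pow_le_pow_of_le_one hn0.le hn1.le (by omega)

end MomentBox

theorem stmt16 {A : Type*} [Infinite A] (E : Submodule ℝ (A → ℝ))
    (hdense : Dense (E : Set (A → ℝ)))
    (hferal : ∀ s : Set E, Bornology.IsVonNBounded ℝ s →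
      FiniteDimensional ℝ (Submodule.span ℝ s)) :
    ¬ KappaFrechetUrysohn E := by
  intro hFU
  set a := Infinite.natEmbedding A
  set t : ℕ → ℝ := fun n => 2⁻¹ ^ (n + 1)
  have ht : ∀ n, t n ∈ Ioo 0 1 := fun n =>
    ⟨by positivity, pow_lt_one₀ (by norm_num) (by norm_num) (by omega)⟩
  have ht0 : Tendsto t atTop (𝓝[>] 0) :=
    tendsto_nhdsWithin_of_tendsto_nhds_of_eventually_within _
      ((tendsto_pow_atTop_nhds_zero_of_lt_one (by norm_num) (by norm_num)).comp
        (tendsto_add_atTop_nat 1)) (.of_forall fun n => (ht n).1)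
  set O := ⋃ n, momentBox a (t n) n
  have hO : IsOpen O := isOpen_iUnion fun n => isOpen_momentBox a _ n
  have h0 : (0 : E) ∈ closure (Subtype.val ⁻¹' O) := by
    rw [closure_subtype, image_preimage_eq_inter_range, Subtype.range_val]
    exact closure_minimal (hdense.open_subset_closure_inter hO) isClosed_closure
      (zero_mem_closure_iUnion_momentBox a.injective ht0)
  obtain ⟨u, huO, hu0⟩ := hFU _ (hO.preimage continuous_subtype_val) 0 h0
  choose n hn using fun k => mem_iUnion.1 (huO k)
  set F := span ℝ (range fun k => (u k : A → ℝ))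
  have hF : FiniteDimensional ℝ F := by
    have := hferal _ (hu0.isVonNBounded_range ℝ)
    rw [show F = (span ℝ (range u)).map E.subtype by rw [← span_image, ← range_comp]; rfl]
    infer_instance
  have hn_top := tendsto_atTop_of_mem_momentBox a ht
    ((continuous_subtype_val.tendsto 0).comp hu0) hn
  obtain ⟨k, hk⟩ := (hn_top.eventually (eventually_disjoint_momentBox a ht0 F)).exists
  exact Set.disjoint_left.1 hk (hn k) (subset_span (mem_range_self k))
end

section
/- Every κ-Fréchet–Urysohn locally convex space E is b-Baire-like: for every increasing sequence (A_n) of closed, absolutely convex, bornivorous subsets of E whose union is E, some A_n is a neighborhood of 0. -/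
open Filter Topology Pointwise

/-!
Suppose no `A n` is a neighbourhood of `0`, and let `Dₙ = (n + 1) • A n`. The open sets `Dₙᶜ`
miss `0` but have `0` in their closure. In a κ-Fréchet–Urysohn group this gives a null sequence
`g j ∉ D (n j)` with `n j → ∞`: take a null sequence `a k ∈ D₀ᶜ`, shift a small piece of `Dₖᶜ`
by `-a k` to an open set `Pₖ` whose closure avoids `0` but contains `-a k`, and take a null
sequence in `⋃ Pₖ`, which meets each `Pₖ` only finitely often. Since `g` is bounded, it lies in
some `m • A 0 ⊆ D (n j)`, which is a contradiction.
-/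

namespace KappaFrechetUrysohn

variable {X : Type*} [AddGroup X] [TopologicalSpace X] [IsTopologicalAddGroup X]

theorem exists_tendsto_zero_mem_diagonal (hκ : KappaFrechetUrysohn X) {G : ℕ → Set X}
    (hG : ∀ k, IsOpen (G k)) (hG0 : ∀ k, (0 : X) ∉ G k) (hGcl : ∀ k, (0 : X) ∈ closure (G k)) :
    ∃ (g : ℕ → X) (n : ℕ → ℕ), Tendsto g atTop (𝓝 0) ∧ Tendsto n atTop atTop ∧
      ∀ j, g j ∈ G (n j) := by
  obtain ⟨a, haG, ha⟩ := hκ (G 0) (hG 0) 0 (hGcl 0)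
  have hsep : ∀ k, Disjoint (𝓝 (0 : X)) (𝓝 (a k)) := fun k =>
    disjoint_nhds_nhds_iff_not_inseparable.2 fun h => hG0 0 ((h.mem_open_iff (hG 0)).2 (haG k))
  choose W hW V hV hWV using fun k =>
    ((nhds_basis_opens (0 : X)).disjoint_iff (nhds_basis_opens (a k))).1 (hsep k)
  set P : ℕ → Set X := fun k => (· + a k) ⁻¹' (G k ∩ W k)
  have hPcl : ∀ k, closure (P k) = (· + a k) ⁻¹' closure (G k ∩ W k) := fun k =>
    ((Homeomorph.addRight (a k)).preimage_closure _).symm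
  have hP0 : ∀ k, (0 : X) ∉ closure (P k) := by
    intro k h
    rw [hPcl, Set.mem_preimage, zero_add] at h
    exact (hWV k).closure_left (hV k).2 |>.notMem_of_mem_left
      (closure_mono Set.inter_subset_right h) (hV k).1
  have hHcl : (0 : X) ∈ closure (⋃ k, P k) := by
    have hneg : ∀ k, -a k ∈ closure (⋃ k, P k) := fun k => by
      refine closure_mono (Set.subset_iUnion P k) ?_
      rw [hPcl, Set.mem_preimage, neg_add_cancel, Set.inter_comm]
      exact (hW k).2.inter_closure ⟨(hW k).1, hGcl k⟩
    simpa using isClosed_closure.mem_of_tendsto ha.neg (Eventually.of_forall hneg)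
  obtain ⟨w, hwP, hw⟩ := hκ _ (isOpen_iUnion fun k => ((hG k).inter (hW k).2).preimage
    (continuous_add_const _)) 0 hHcl
  choose n hn using fun j => Set.mem_iUnion.1 (hwP j)
  have hfin : ∀ k, (n ⁻¹' {k}).Finite := by
    intro k
    have hev := hw.eventually (isClosed_closure.isOpen_compl.mem_nhds (hP0 k))
    rw [← Nat.cofinite_eq_atTop, eventually_cofinite] at hev
    refine hev.subset fun j (hj : n j = k) => ?_
    exact not_not.2 (subset_closure (hj ▸ hn j))
  have hn_top : Tendsto n atTop atTop := by
    simpa only [Nat.cofinite_eq_atTop] using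
      Tendsto.cofinite_of_finite_preimage_singleton fun k => (hfin k).to_subtype
  exact ⟨fun j => w j + a (n j), n, by simpa using hw.add (ha.comp hn_top), hn_top,
    fun j => (hn j).1⟩

end KappaFrechetUrysohn

theorem stmt17_general {E : Type*} [AddCommGroup E] [Module ℝ E] [TopologicalSpace E]
    [IsTopologicalAddGroup E] [ContinuousSMul ℝ E]
    (hκ : KappaFrechetUrysohn E)
    (A : ℕ → Set E) (hmono : Monotone A)
    (hclosed : ∀ n, IsClosed (A n))
    (hbal : ∀ n, Balanced ℝ (A n))
    (hborn : ∀ n, ∀ B : Set E, Bornology.IsVonNBounded ℝ B → ∃ m : ℕ, B ⊆ (m : ℝ) • (A n)) :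
    ∃ n, A n ∈ 𝓝 (0 : E) := by
  by_contra! hA
  set D : ℕ → Set E := fun n => ((n : ℝ) + 1) • A n
  have hD0 : ∀ n, (0 : E) ∈ D n := fun n => by
    obtain ⟨m, hm⟩ := hborn n {0} (Bornology.isVonNBounded_singleton 0)
    exact Set.zero_mem_smul_set <| (hbal n).zero_mem <| Set.smul_set_nonempty.1 ⟨0, hm rfl⟩
  obtain ⟨g, k, hg, hk, hgD⟩ := hκ.exists_tendsto_zero_mem_diagonal (G := fun n => (D n)ᶜ)
    (fun n => ((hclosed n).smul_of_ne_zero (Nat.cast_add_one_ne_zero n)).isOpen_compl)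
    (fun n => not_not.2 (hD0 n))
    (fun n => by
      rw [closure_compl, Set.mem_compl_iff, mem_interior_iff_mem_nhds,
        set_smul_mem_nhds_zero_iff (Nat.cast_add_one_ne_zero n)]
      exact hA n)
  obtain ⟨m, hm⟩ := hborn 0 _ (hg.isVonNBounded_range ℝ)
  obtain ⟨j, hj⟩ := (hk.eventually_ge_atTop m).exists
  have hmD : (m : ℝ) • A 0 ⊆ D (k j) :=
    calc (m : ℝ) • A 0 ⊆ (m : ℝ) • A (k j) := Set.smul_set_mono (hmono (Nat.zero_le _))
      _ ⊆ D (k j) := (hbal _).smul_mono <| by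
        rw [Real.norm_of_nonneg (by positivity), Real.norm_of_nonneg (by positivity)]
        exact_mod_cast Nat.le_succ_of_le hj
  exact hgD j (hmD (hm (Set.mem_range_self j)))

theorem stmt17 {E : Type*} [AddCommGroup E] [Module ℝ E] [TopologicalSpace E]
    [IsTopologicalAddGroup E] [ContinuousSMul ℝ E] [LocallyConvexSpace ℝ E]
    (hκ : KappaFrechetUrysohn E)
    (A : ℕ → Set E) (hmono : Monotone A)
    (hclosed : ∀ n, IsClosed (A n)) (hconv : ∀ n, Convex ℝ (A n))
    (hbal : ∀ n, Balanced ℝ (A n))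
    (hborn : ∀ n, ∀ B : Set E, Bornology.IsVonNBounded ℝ B → ∃ m : ℕ, B ⊆ (m : ℝ) • (A n))
    (hcover : ⋃ n, A n = Set.univ) :
    ∃ n, A n ∈ 𝓝 (0 : E) :=
  stmt17_general hκ A hmono hclosed hbal hborn
end

section
/- Let E be a κ-Fréchet–Urysohn locally convex space. If for every increasing sequence (A_n) of closed absolutely convex subsets of E covering E, the closures of A_n in the completion of E cover the completion, then E is Baire-like: for every such sequence (A_n), some A_n is a neighborhood of 0. -/
open Filter Topology

open Set Pointwise UniformSpace

/-!
Suppose no `A n` is a neighbourhood of `0`. Then the closed absolutely convex sets `(n + 1) • A n`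
have empty interior, and the κ-Fréchet–Urysohn property yields a null sequence `u` that eventually
leaves each of them. On the other hand, the closure in the completion of the convex hull of `±u` is
compact, hence Baire, and it is covered by the closures of the `A n`; so one of these contains a
relatively open piece of it. Pulling back to `E` and using absolute convexity, `t • u j ∈ A n` for
some `t > 0` and all large `j`, which contradicts the choice of `u`.
-/

theorem KappaFrechetUrysohn.exists_tendsto_eventually_notMem {X : Type*} [TopologicalSpace X]
    [R1Space X] (hX : KappaFrechetUrysohn X) {C : ℕ → Set X} (hmono : Monotone C)
    (hclosed : ∀ n, IsClosed (C n)) (hint : ∀ n, interior (C n) = ∅) {x : X} {n₀ : ℕ}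
    (hx : x ∈ C n₀) : ∃ u : ℕ → X, Tendsto u atTop (𝓝 x) ∧ ∀ N, ∀ᶠ j in atTop, u j ∉ C N := by
  have hx' : x ∈ closure (closure {x})ᶜ := by
    rw [closure_compl]
    intro h
    simpa [hint n₀] using
      interior_mono ((hclosed n₀).closure_subset_iff.2 (singleton_subset_iff.2 hx)) h
  obtain ⟨p, hp, hpx⟩ := hX _ isClosed_closure.isOpen_compl x hx'
  have hsep (i : ℕ) : ∃ O ∈ 𝓝 (p i), ∃ V ∈ 𝓝 x, Disjoint O V :=
    Filter.disjoint_iff.1 (disjoint_nhds_nhds_iff_not_specializes.2 fun h =>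
      hp i (specializes_iff_mem_closure.1 h.symm))
  choose O hO V hV hOV using hsep
  -- `U` accumulates at `x` since each `(C i)ᶜ` is dense; a sequence in `U` tending to `x` is
  -- eventually in every `V i` with `i ≤ N`, hence in a piece of `U` with index `i > N`
  set U := ⋃ i, (C i)ᶜ ∩ interior (O i)
  have hUo : IsOpen U := isOpen_iUnion fun i => (hclosed i).isOpen_compl.inter isOpen_interior
  have hxU : x ∈ closure U := by
    refine mem_closure_iff_nhds.2 fun N hN => ?_
    obtain ⟨i, hi⟩ := (hpx.eventually (interior_mem_nhds.2 hN)).exists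
    obtain ⟨z, ⟨hzN, hzO⟩, hzC⟩ :=
      (interior_eq_empty_iff_dense_compl.1 (hint i)).inter_open_nonempty _
        (isOpen_interior.inter isOpen_interior) ⟨p i, hi, mem_interior_iff_mem_nhds.2 (hO i)⟩
    exact ⟨z, interior_subset hzN, mem_iUnion.2 ⟨i, hzC, hzO⟩⟩
  obtain ⟨u, hu, hux⟩ := hX U hUo x hxU
  refine ⟨u, hux, fun N => ?_⟩
  have hV' : ∀ᶠ j in atTop, ∀ i ∈ Iic N, u j ∈ V i :=
    (eventually_all_finite (finite_Iic N)).2 fun i _ => hux (hV i)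
  filter_upwards [hV'] with j hj hjC
  obtain ⟨i, hiC, hiO⟩ := mem_iUnion.1 (hu j)
  rcases le_or_gt i N with h | h
  · exact disjoint_left.1 (hOV i) (interior_subset hiO) (hj i h)
  · exact hiC (hmono h.le hjC)

theorem IsCompact.exists_mem_nhdsWithin_of_subset_iUnion {X ι : Type*} [TopologicalSpace X]
    [R1Space X] [Countable ι] {K : Set X} (hK : IsCompact K) (hne : K.Nonempty)
    {B : ι → Set X} (hB : ∀ i, IsClosed (B i)) (hcover : K ⊆ ⋃ i, B i) :
    ∃ i, ∃ x ∈ K, B i ∈ 𝓝[K] x := by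
  have := isCompact_iff_compactSpace.1 hK
  have := hne.to_subtype
  obtain ⟨i, x, hx⟩ := nonempty_interior_of_iUnion_of_closed
    (fun i => (hB i).preimage continuous_subtype_val)
    (eq_univ_of_forall fun x : K => by simpa using hcover x.2)
  refine ⟨i, x, x.2, ?_⟩
  rw [nhdsWithin_eq_map_subtype_coe x.2]
  exact mem_interior_iff_mem_nhds.1 hx

theorem Balanced.smul_subset_smul_of_le {E : Type*} [AddCommGroup E] [Module ℝ E] {s : Set E}
    (hs : Balanced ℝ s) {a b : ℝ} (ha : 0 ≤ a) (hab : a ≤ b) : a • s ⊆ b • s :=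
  hs.smul_mono (by rwa [Real.norm_of_nonneg ha, Real.norm_of_nonneg (ha.trans hab)])

theorem Balanced.mem_nhds_zero_of_interior_nonempty {E : Type*} [AddCommGroup E] [Module ℝ E]
    [TopologicalSpace E] [IsTopologicalAddGroup E] [ContinuousConstSMul ℝ E] {A : Set E}
    (hbal : Balanced ℝ A) (hconv : Convex ℝ A) (h : (interior A).Nonempty) : A ∈ 𝓝 0 := by
  obtain ⟨p, hp⟩ := h
  have hp' : -p ∈ interior A := by
    rw [mem_interior_iff_mem_nhds, ← hbal.neg_eq]
    exact continuous_neg.continuousAt.preimage_mem_nhds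
      (by rwa [neg_neg, ← mem_interior_iff_mem_nhds])
  rw [← mem_interior_iff_mem_nhds]
  simpa using hconv.interior hp hp' (by norm_num : (0 : ℝ) ≤ 1 / 2) (by norm_num : (0 : ℝ) ≤ 1 / 2)
    (by norm_num)

theorem Balanced.exists_pos_eventually_smul_mem {E : Type*} [AddCommGroup E] [Module ℝ E]
    [TopologicalSpace E] [ContinuousAdd E] [ContinuousSMul ℝ E] {H A : Set E}
    (hbal : Balanced ℝ A) (hconv : Convex ℝ A) (hH : Convex ℝ H) {h₀ : E} (hh₀ : h₀ ∈ H)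
    (hA : A ∈ 𝓝[H] h₀) : ∃ t : ℝ, 0 < t ∧ ∀ᶠ v in 𝓝 0, v ∈ H → -v ∈ H → t • v ∈ A := by
  obtain ⟨W, hW, hWA⟩ := mem_nhdsWithin_iff_exists_mem_nhds_inter.1 hA
  have hshrink : Tendsto (fun t : ℝ => (1 - t) • h₀) (𝓝[>] 0) (𝓝 h₀) := by
    have := ((continuous_const.sub continuous_id).smul continuous_const).tendsto (0 : ℝ)
      (f := fun t : ℝ => (1 - t) • h₀)
    simpa using this.mono_left nhdsWithin_le_nhds
  obtain ⟨t, htW, ht0, ht1⟩ : ∃ t : ℝ, (1 - t) • h₀ ∈ interior W ∧ 0 < t ∧ t < 1 :=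
    ((hshrink.eventually (interior_mem_nhds.2 hW)).and (Ioo_mem_nhdsGT one_pos)).exists
  have hnear (s : ℝ) : ∀ᶠ v in 𝓝 (0 : E), (1 - t) • h₀ + s • v ∈ W := by
    have : Tendsto (fun v : E => (1 - t) • h₀ + s • v) (𝓝 0) (𝓝 ((1 - t) • h₀)) :=
      (continuous_const.add (continuous_const_smul s)).tendsto' 0 _ (by simp)
    exact this.eventually (mem_interior_iff_mem_nhds.1 htW)
  have hcomb : ∀ w ∈ H, (1 - t) • h₀ + t • w ∈ H := fun w hw =>
    hH hh₀ hw (sub_nonneg.2 ht1.le) ht0.le (sub_add_cancel 1 t)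
  refine ⟨t, ht0, ?_⟩
  filter_upwards [hnear t, hnear (-t)] with v hvW hvW' hv hv'
  -- `t • v` is the midpoint of two points of `W ∩ H ⊆ A`, one of them reflected through `0`
  have h₁ : (1 - t) • h₀ + t • v ∈ A := hWA ⟨hvW, hcomb v hv⟩
  have h₂ : -((1 - t) • h₀ + t • -v) ∈ A :=
    hbal.neg_mem_iff.2 (hWA ⟨by rwa [smul_neg, ← neg_smul], hcomb (-v) hv'⟩)
  convert hconv h₁ h₂ (by norm_num : (0 : ℝ) ≤ 1 / 2) (by norm_num : (0 : ℝ) ≤ 1 / 2) (by norm_num)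
    using 1
  module

theorem exists_pos_eventually_smul_mem_of_iUnion_closure_coe_eq_univ {E : Type*}
    [AddCommGroup E] [Module ℝ E] [UniformSpace E] [IsUniformAddGroup E] [ContinuousSMul ℝ E]
    [LocallyConvexSpace ℝ E] {A : ℕ → Set E} (hclosed : ∀ n, IsClosed (A n))
    (hconv : ∀ n, Convex ℝ (A n)) (hbal : ∀ n, Balanced ℝ (A n))
    (hcover : ⋃ n, closure (((↑) : E → Completion E) '' A n) = univ) {u : ℕ → E}
    (hu : Tendsto u atTop (𝓝 0)) : ∃ n, ∃ t : ℝ, 0 < t ∧ ∀ᶠ j in atTop, t • u j ∈ A n := by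
  set S := insert 0 (range u)
  have hS : IsCompact S := hu.isCompact_insert_range
  set H := convexHull ℝ (S ∪ -S)
  have hK : IsCompact (closure (((↑) : E → Completion E) '' H)) :=
    (((hS.union hS.neg).totallyBounded.convexHull).image
      (Completion.uniformContinuous_coe E)).closure.isCompact_of_isClosed isClosed_closure
  have h0K : (0 : Completion E) ∈ closure (((↑) : E → Completion E) '' H) :=
    subset_closure ⟨0, subset_convexHull _ _ (.inl (mem_insert _ _)), Completion.coe_zero⟩
  obtain ⟨n, k, hk, hBk⟩ := hK.exists_mem_nhdsWithin_of_subset_iUnion ⟨0, h0K⟩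
    (fun n => isClosed_closure) (hcover ▸ subset_univ _)
  obtain ⟨W, hWo, hkW, hWB⟩ := mem_nhdsWithin.1 hBk
  obtain ⟨_, hW, h₀, hh₀, rfl⟩ := mem_closure_iff.1 hk W hWo hkW
  have hA : A n ∈ 𝓝[H] h₀ := by
    refine mem_nhdsWithin.2 ⟨_, hWo.preimage (Completion.continuous_coe E), hW, ?_⟩
    rintro h ⟨hhW, hh⟩
    have : h ∈ (↑) ⁻¹' closure (((↑) : E → Completion E) '' A n) :=
      hWB ⟨hhW, subset_closure (mem_image_of_mem _ hh)⟩
    rwa [← Completion.isDenseInducing_coe.isInducing.closure_eq_preimage_closure_image,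
      (hclosed n).closure_eq] at this
  obtain ⟨t, ht, hev⟩ :=
    (hbal n).exists_pos_eventually_smul_mem (hconv n) (convex_convexHull ℝ _) hh₀ hA
  refine ⟨n, t, ht, (hu.eventually hev).mono fun j hj => hj ?_ ?_⟩
  · exact subset_convexHull _ _ (.inl (mem_insert_of_mem _ ⟨j, rfl⟩))
  · exact subset_convexHull _ _ (.inr (by simp [S]))

theorem stmt18 {E : Type*} [AddCommGroup E] [Module ℝ E] [UniformSpace E]
    [IsUniformAddGroup E] [ContinuousSMul ℝ E] [LocallyConvexSpace ℝ E]
    (hκ : KappaFrechetUrysohn E)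
    (hcomp : ∀ A : ℕ → Set E, Monotone A → (∀ n, IsClosed (A n)) → (∀ n, Convex ℝ (A n)) →
      (∀ n, Balanced ℝ (A n)) → (⋃ n, A n = Set.univ) →
      (⋃ n, closure ((fun x : E => (x : UniformSpace.Completion E)) '' A n)) = Set.univ) :
    ∀ A : ℕ → Set E, Monotone A → (∀ n, IsClosed (A n)) → (∀ n, Convex ℝ (A n)) →
      (∀ n, Balanced ℝ (A n)) → (⋃ n, A n = Set.univ) → ∃ n, A n ∈ 𝓝 (0 : E) := by
  intro A hmono hclosed hconv hbal hcover
  by_contra! hA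
  set C : ℕ → Set E := fun N => ((N : ℝ) + 1) • A N
  have hCmono : Monotone C := fun M N h =>
    ((hbal M).smul_subset_smul_of_le (by positivity) (by gcongr)).trans (smul_set_mono (hmono h))
  have hCclosed (N : ℕ) : IsClosed (C N) := (hclosed N).smul_of_ne_zero (by positivity)
  have hCint (N : ℕ) : interior (C N) = ∅ := by
    refine not_nonempty_iff_eq_empty.1 fun h => hA N ?_
    exact (set_smul_mem_nhds_zero_iff (by positivity)).1
      (((hbal N).smul _).mem_nhds_zero_of_interior_nonempty ((hconv N).smul _) h)
  obtain ⟨n₀, h0⟩ : ∃ n, (0 : E) ∈ A n := mem_iUnion.1 (hcover ▸ mem_univ 0)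
  obtain ⟨u, hu, hesc⟩ :=
    hκ.exists_tendsto_eventually_notMem hCmono hCclosed hCint (x := 0) ⟨0, h0, smul_zero _⟩
  obtain ⟨n, t, ht, hut⟩ := exists_pos_eventually_smul_mem_of_iUnion_closure_coe_eq_univ
    hclosed hconv hbal (hcomp A hmono hclosed hconv hbal hcover) hu
  obtain ⟨M, hM⟩ := exists_nat_ge t⁻¹
  have hsub : t⁻¹ • A n ⊆ C (max n M) :=
    ((hbal n).smul_subset_smul_of_le (by positivity)
      (hM.trans (by exact_mod_cast (le_max_right n M).trans (Nat.le_succ _)))).trans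
      (smul_set_mono (hmono (le_max_left n M)))
  obtain ⟨j, hj, hj'⟩ := (hut.and (hesc (max n M))).exists
  exact hj' (hsub ⟨_, hj, inv_smul_smul₀ ht.ne' (u j)⟩)
end
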